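/- arXiv:1609.05139 — 5 statements merged into one kernel-verified Lean document; each statement's English description precedes it below -/
import Mathlib

section
/- Let ψ, Ψ : ℝ → ℝ be differentiable functions such that ψ'(z) = (Ψ'(z))² for all z ∈ ℝ. Then for all real numbers a, b one has (ψ(a) − ψ(b))·(a − b) ≥ (Ψ(a) − Ψ(b))². -/
open intervalIntegral MeasureTheory

/-- Cauchy–Schwarz for interval integrals with constant weight. -/
lemma cs_interval (f : ℝ → ℝ) (b a : ℝ) (hab : b ≤ a)
    (hf : IntervalIntegrable f volume b a)
    (hf2 : IntervalIntegrable (fun t => f t ^ 2) volume b a) :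
    (∫ t in b..a, f t) ^ 2 ≤ (a - b) * ∫ t in b..a, f t ^ 2 := by
  rcases eq_or_lt_of_le hab with h | h
  · simp [← h]
  set L := a - b with hL
  have hL0 : 0 < L := by simp [hL]; linarith
  set I := ∫ t in b..a, f t with hI
  set S := ∫ t in b..a, f t ^ 2 with hS
  set c := I / L with hc
  have key : 0 ≤ ∫ t in b..a, (f t - c) ^ 2 := by
    apply intervalIntegral.integral_nonneg hab
    intro x _; positivity
  have expand : ∫ t in b..a, (f t - c) ^ 2 = S - 2 * c * I + c ^ 2 * L := by
    have : ∀ t, (f t - c) ^ 2 = f t ^ 2 - (2 * c) * f t + c ^ 2 := by intro t; ring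
    simp_rw [this]
    rw [intervalIntegral.integral_add (hf2.sub (hf.const_mul _)) intervalIntegrable_const,
      intervalIntegral.integral_sub hf2 (hf.const_mul _),
      intervalIntegral.integral_const_mul, intervalIntegral.integral_const]
    simp [hS, hI, hL, smul_eq_mul]
    ring
  rw [expand] at key
  have : c * L = I := by rw [hc]; exact div_mul_cancel₀ I hL0.ne'
  nlinarith [sq_nonneg c]

/-- Pointwise inequality underlying the generalized Stroock–Varopoulos inequality:
if `ψ' = (Ψ')²` everywhere, then `(ψ a − ψ b)(a − b) ≥ (Ψ a − Ψ b)²`. -/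
theorem pointwise_stroock_varopoulos
    (ψ Ψ : ℝ → ℝ) (hψ : Differentiable ℝ ψ) (hΨ : Differentiable ℝ Ψ)
    (h : ∀ z : ℝ, deriv ψ z = (deriv Ψ z) ^ 2) (a b : ℝ) :
    (Ψ a - Ψ b) ^ 2 ≤ (ψ a - ψ b) * (a - b) := by
  -- reduce to the case b ≤ a by symmetry
  wlog hab : b ≤ a with H
  · have := H ψ Ψ hψ hΨ h b a (le_of_not_ge hab)
    have e1 : (Ψ b - Ψ a) ^ 2 = (Ψ a - Ψ b) ^ 2 := by ring
    have e2 : (ψ b - ψ a) * (b - a) = (ψ a - ψ b) * (a - b) := by ring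
    linarith [this, e1 ▸ this]
  -- integrability of deriv ψ = (deriv Ψ)^2 (nonneg derivative)
  have hψ'int : IntervalIntegrable (deriv ψ) volume b a := by
    apply intervalIntegrable_deriv_of_nonneg (hψ.continuous.continuousOn)
    · intro x _; exact (hψ x).hasDerivAt
    · intro x _; rw [h x]; positivity
  have hΨ'sq_int : IntervalIntegrable (fun t => deriv Ψ t ^ 2) volume b a := by
    refine hψ'int.congr ?_
    intro x _; exact h x
  -- integrability of deriv Ψ via |f| ≤ (1 + f^2)/2
  have hΨ'meas : AEStronglyMeasurable (deriv Ψ) (volume.restrict (Set.uIoc b a)) :=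
    (measurable_deriv Ψ).aestronglyMeasurable
  have hΨ'int : IntervalIntegrable (deriv Ψ) volume b a := by
    have hbound : IntervalIntegrable (fun t => (1 + deriv Ψ t ^ 2) / 2) volume b a := by
      apply IntervalIntegrable.div_const
      exact intervalIntegrable_const.add hΨ'sq_int
    refine hbound.mono_fun hΨ'meas ?_
    filter_upwards with x
    have h1 : |deriv Ψ x| ≤ (1 + deriv Ψ x ^ 2) / 2 := by nlinarith [abs_nonneg (deriv Ψ x), sq_abs (deriv Ψ x), sq_nonneg (|deriv Ψ x| - 1)]
    have h2 : (0:ℝ) ≤ (1 + deriv Ψ x ^ 2) / 2 := by positivity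
    rw [Real.norm_eq_abs, Real.norm_eq_abs, abs_div, abs_of_nonneg (by positivity : (0:ℝ) ≤ 1 + deriv Ψ x ^ 2), abs_of_nonneg (by norm_num : (0:ℝ) ≤ 2)]
    exact h1
  -- FTC
  have hψeq : ∫ t in b..a, deriv ψ t = ψ a - ψ b :=
    intervalIntegral.integral_deriv_eq_sub (fun x _ => hψ x) hψ'int
  have hΨeq : ∫ t in b..a, deriv Ψ t = Ψ a - Ψ b :=
    intervalIntegral.integral_deriv_eq_sub (fun x _ => hΨ x) hΨ'int
  have hψeq' : ∫ t in b..a, deriv Ψ t ^ 2 = ψ a - ψ b := by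
    rw [← hψeq]
    apply intervalIntegral.integral_congr
    intro x _; exact (h x).symm
  have := cs_interval (deriv Ψ) b a hab hΨ'int hΨ'sq_int
  rw [hΨeq, hψeq'] at this
  linarith [this]
end

section
/- Let q > 1 be a real number. Then for all real numbers a, b ≥ 0 one has (a^{q−1} − b^{q−1})·(a − b) ≥ (4(q−1)/q²)·(a^{q/2} − b^{q/2})². -/
open intervalIntegral MeasureTheory

private lemma sv_cs (q a b : ℝ) (hq : 1 < q) (hb : 0 ≤ b) (hab : b ≤ a) :
    (∫ t in b..a, t ^ (q / 2 - 1)) ^ 2 ≤ (a - b) * ∫ t in b..a, t ^ (q - 2) := by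
  set I1 : ℝ := ∫ t in b..a, t ^ (q / 2 - 1) with hI1
  have h1 : IntervalIntegrable (fun t : ℝ => t ^ (q / 2 - 1)) volume b a :=
    intervalIntegrable_rpow' (by linarith)
  have h2 : IntervalIntegrable (fun t : ℝ => t ^ (q - 2)) volume b a :=
    intervalIntegrable_rpow' (by linarith)
  rcases eq_or_lt_of_le hab with rfl | hlt
  · simp [hI1]
  have hnn : 0 ≤ ∫ t in b..a, ((a - b) * t ^ (q / 2 - 1) - I1) ^ 2 :=
    intervalIntegral.integral_nonneg hab (fun t _ => sq_nonneg _)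
  have hcongr : (∫ t in b..a, ((a - b) * t ^ (q / 2 - 1) - I1) ^ 2)
      = ∫ t in b..a, ((a - b) ^ 2 * t ^ (q - 2)
          - (2 * (a - b) * I1) * t ^ (q / 2 - 1) + I1 ^ 2) := by
    apply intervalIntegral.integral_congr
    intro t ht
    rw [Set.uIcc_of_le hab] at ht
    have h0t : 0 ≤ t := le_trans hb ht.1
    have hts : t ^ (q - 2) = (t ^ (q / 2 - 1)) ^ 2 := by
      rw [show q - 2 = (q / 2 - 1) * 2 by ring, Real.rpow_mul h0t, Real.rpow_two]
    simp only [hts]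
    ring
  have hval : (∫ t in b..a, ((a - b) ^ 2 * t ^ (q - 2)
      - (2 * (a - b) * I1) * t ^ (q / 2 - 1) + I1 ^ 2))
      = (a - b) ^ 2 * (∫ t in b..a, t ^ (q - 2))
        - (2 * (a - b) * I1) * I1 + I1 ^ 2 * (a - b) := by
    rw [intervalIntegral.integral_add (((h2.const_mul _).sub (h1.const_mul _)))
        intervalIntegrable_const,
      intervalIntegral.integral_sub (h2.const_mul _) (h1.const_mul _),
      intervalIntegral.integral_const_mul, intervalIntegral.integral_const_mul,
      intervalIntegral.integral_const, ← hI1, smul_eq_mul]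
    ring
  rw [hcongr, hval] at hnn
  nlinarith [hnn, sq_nonneg (a - b)]

private lemma sv_aux (q a b : ℝ) (hq : 1 < q) (hb : 0 ≤ b) (hab : b ≤ a) :
    4 * (q - 1) / q ^ 2 * (a ^ (q / 2) - b ^ (q / 2)) ^ 2 ≤
      (a ^ (q - 1) - b ^ (q - 1)) * (a - b) := by
  have hq0 : (0:ℝ) < q := by linarith
  have hv1 : (∫ t in b..a, t ^ (q / 2 - 1)) = (a ^ (q / 2) - b ^ (q / 2)) / (q / 2) := by
    rw [integral_rpow (Or.inl (by linarith))]
    rw [show q / 2 - 1 + 1 = q / 2 by ring]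
  have hv2 : (∫ t in b..a, t ^ (q - 2)) = (a ^ (q - 1) - b ^ (q - 1)) / (q - 1) := by
    rw [integral_rpow (Or.inl (by linarith))]
    rw [show q - 2 + 1 = q - 1 by ring]
  have key := sv_cs q a b hq hb hab
  rw [hv1, hv2] at key
  have hq1 : q - 1 ≠ 0 := by linarith
  have hqne : q ≠ 0 := by linarith
  rw [div_pow] at key
  field_simp at key
  rw [le_div_iff₀ (by linarith)] at key
  rw [div_mul_eq_mul_div, div_le_iff₀ (by positivity)]
  nlinarith [key]

/-- Pointwise inequality underlying the classical Stroock–Varopoulos inequality: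
for `q > 1` and `a, b ≥ 0`,
`(a^{q−1} − b^{q−1})(a − b) ≥ (4(q−1)/q²)(a^{q/2} − b^{q/2})²`. -/
theorem pointwise_classical_stroock_varopoulos
    (q : ℝ) (hq : 1 < q) (a b : ℝ) (ha : 0 ≤ a) (hb : 0 ≤ b) :
    4 * (q - 1) / q ^ 2 * (a ^ (q / 2) - b ^ (q / 2)) ^ 2 ≤
      (a ^ (q - 1) - b ^ (q - 1)) * (a - b) := by
  rcases le_total b a with h | h
  · exact sv_aux q a b hq hb h
  · have := sv_aux q b a hq ha h
    nlinarith [this]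
end

section
/- (Generalized Stroock–Varopoulos inequality for the approximated fractional Laplacian.) Let N ≥ 1, s ∈ (0,1), ε > 0, and let J_ε(z) = C·(‖z‖² + ε²)^{−(N+2s)/2} with C > 0. Let u : ℝ^N → ℝ be measurable with u ∈ L¹(ℝ^N) ∩ L^∞(ℝ^N), and define L_ε u(x) = ∫_{ℝ^N} (u(x) − u(y)) J_ε(x−y) dy. Let ψ, Ψ : ℝ → ℝ be continuously differentiable with ψ(0) = 0, Ψ(0) = 0 and ψ'(z) = (Ψ'(z))² for all z. Then ∫_{ℝ^N} ψ(u(x))·L_ε u(x) dx ≥ (1/2)·∫∫_{ℝ^N×ℝ^N} (Ψ(u(x)) − Ψ(u(y)))²·J_ε(x−y) dx dy. -/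
open MeasureTheory

lemma my_cs (b a : ℝ) (hba : b ≤ a) (f : ℝ → ℝ) (hf : Continuous f) :
    (∫ t in b..a, f t) ^ 2 ≤ (a - b) * ∫ t in b..a, (f t) ^ 2 := by
  rcases eq_or_lt_of_le hba with rfl | h
  · simp
  have hab : 0 < a - b := by linarith
  set I := ∫ t in b..a, f t with hI
  set l := I / (a - b) with hl
  have hint : IntervalIntegrable f volume b a := hf.intervalIntegrable _ _
  have hint2 : IntervalIntegrable (fun t => (f t) ^ 2) volume b a :=
    (hf.pow 2).intervalIntegrable _ _
  have h0 : 0 ≤ ∫ t in b..a, (f t - l) ^ 2 :=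
    intervalIntegral.integral_nonneg hba (fun _ _ => sq_nonneg _)
  have hexp : ∫ t in b..a, (f t - l) ^ 2
      = (∫ t in b..a, (f t) ^ 2) - 2 * l * I + l ^ 2 * (a - b) := by
    have : ∀ t, (f t - l) ^ 2 = (f t) ^ 2 - (2 * l) * f t + l ^ 2 := by intro t; ring
    simp_rw [this]
    rw [intervalIntegral.integral_add ((hint2.sub ((hint.const_mul (2*l)))) )
      (intervalIntegrable_const), intervalIntegral.integral_sub hint2 (hint.const_mul (2*l)),
      intervalIntegral.integral_const_mul, intervalIntegral.integral_const]
    ring_nf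
    rw [← hI]
  rw [hexp] at h0
  have : l * (a - b) = I := by rw [hl, div_mul_cancel₀ _ hab.ne']
  nlinarith [sq_nonneg I]

lemma my_key (ψ Ψ : ℝ → ℝ) (hψ : ContDiff ℝ 1 ψ) (hΨ : ContDiff ℝ 1 Ψ)
    (hder : ∀ z : ℝ, deriv ψ z = (deriv Ψ z) ^ 2) (a b : ℝ) :
    (Ψ a - Ψ b) ^ 2 ≤ (ψ a - ψ b) * (a - b) := by
  have main : ∀ a b : ℝ, b ≤ a → (Ψ a - Ψ b) ^ 2 ≤ (ψ a - ψ b) * (a - b) := by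
    intro a b hba
    have hcψ : Continuous (deriv ψ) := hψ.continuous_deriv le_rfl
    have hcΨ : Continuous (deriv Ψ) := hΨ.continuous_deriv le_rfl
    have hΨeq : Ψ a - Ψ b = ∫ t in b..a, deriv Ψ t := by
      rw [intervalIntegral.integral_deriv_eq_sub
        (fun x _ => (hΨ.differentiable one_ne_zero).differentiableAt)
        (hcΨ.intervalIntegrable _ _)]
    have hψeq : ψ a - ψ b = ∫ t in b..a, (deriv Ψ t) ^ 2 := by
      have h1 : (∫ t in b..a, (deriv Ψ t) ^ 2) = ∫ t in b..a, deriv ψ t :=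
        intervalIntegral.integral_congr (fun x _ => (hder x).symm)
      rw [h1, intervalIntegral.integral_deriv_eq_sub
        (fun x _ => (hψ.differentiable one_ne_zero).differentiableAt)
        (hcψ.intervalIntegrable _ _)]
    rw [hΨeq, hψeq, mul_comm]
    exact my_cs b a hba (deriv Ψ) hcΨ
  rcases le_total b a with h | h
  · exact main a b h
  · have := main b a h
    nlinarith [this]

lemma my_kernel_integrable (N : ℕ) (p ε : ℝ) (hp : (N : ℝ) < p) (hε : 0 < ε) :
    Integrable (fun z : EuclideanSpace ℝ (Fin N) => (‖z‖ ^ 2 + ε ^ 2) ^ (-(p / 2))) := by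
  have hfin : (Module.finrank ℝ (EuclideanSpace ℝ (Fin N)) : ℝ) < p := by
    simpa [finrank_euclideanSpace_fin] using hp
  have hbase : Integrable (fun z : EuclideanSpace ℝ (Fin N) => ((1:ℝ) + ‖z‖ ^ 2) ^ (-p / 2)) :=
    integrable_rpow_neg_one_add_norm_sq hfin
  set c : ℝ := min (ε ^ 2) 1 with hc
  have hc0 : 0 < c := lt_min (by positivity) one_pos
  refine ((hbase.const_mul (c ^ (-p/2))).mono' ?_ (Filter.Eventually.of_forall fun z => ?_))
  · apply Continuous.aestronglyMeasurable
    have hcont : Continuous fun z : EuclideanSpace ℝ (Fin N) => ‖z‖ ^ 2 + ε ^ 2 := by fun_prop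
    exact hcont.rpow_const (fun z => Or.inl (by positivity))
  · have hzpos : (0:ℝ) < ‖z‖ ^ 2 + ε ^ 2 := by positivity
    have h1 : c * (1 + ‖z‖ ^ 2) ≤ ‖z‖ ^ 2 + ε ^ 2 := by
      have h2 : c ≤ ε ^ 2 := min_le_left _ _
      have h3 : c ≤ 1 := min_le_right _ _
      nlinarith [sq_nonneg ‖z‖]
    have h4 : (‖z‖ ^ 2 + ε ^ 2) ^ (-(p/2)) ≤ (c * (1 + ‖z‖ ^ 2)) ^ (-(p/2)) := by
      apply Real.rpow_le_rpow_of_nonpos (by positivity) h1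
      have : 0 < p := lt_of_le_of_lt (Nat.cast_nonneg N) hp
      linarith
    rw [Real.norm_of_nonneg (Real.rpow_nonneg hzpos.le _)]
    calc (‖z‖ ^ 2 + ε ^ 2) ^ (-(p/2)) ≤ (c * (1 + ‖z‖ ^ 2)) ^ (-(p/2)) := h4
      _ = c ^ (-p/2) * (1 + ‖z‖ ^ 2) ^ (-p/2) := by
          rw [Real.mul_rpow hc0.le (by positivity)]; ring_nf

lemma my_prod_integrable (N : ℕ) (f g : EuclideanSpace ℝ (Fin N) → ℝ)
    (hf : Integrable f) (hg : Integrable g) (hgm : Measurable g) :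
    Integrable (fun q : EuclideanSpace ℝ (Fin N) × EuclideanSpace ℝ (Fin N) =>
      f q.1 * g (q.1 - q.2)) (volume.prod volume) := by
  have hmeas : AEStronglyMeasurable
      (fun q : EuclideanSpace ℝ (Fin N) × EuclideanSpace ℝ (Fin N) => f q.1 * g (q.1 - q.2))
      (volume.prod volume) := by
    apply AEStronglyMeasurable.mul
    · exact (hf.aestronglyMeasurable.comp_quasiMeasurePreserving
        MeasureTheory.Measure.quasiMeasurePreserving_fst)
    · exact (hgm.comp (measurable_fst.sub measurable_snd)).aestronglyMeasurable
  rw [MeasureTheory.integrable_prod_iff hmeas]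
  constructor
  · refine Filter.Eventually.of_forall fun x => ?_
    exact (hg.comp_sub_left x).const_mul (f x)
  · have hnorm : ∀ x : EuclideanSpace ℝ (Fin N),
        (∫ y, ‖f x * g (x - y)‖) = ‖f x‖ * ∫ z, ‖g z‖ := by
      intro x
      simp_rw [norm_mul]
      rw [integral_const_mul]
      congr 1
      exact MeasureTheory.integral_sub_left_eq_self (fun z => ‖g z‖) volume x
    simp_rw [hnorm]
    exact hf.norm.mul_const _

lemma my_lip (f : ℝ → ℝ) (hf : ContDiff ℝ 1 f) (M : ℝ) :
    ∃ L : ℝ, 0 ≤ L ∧ ∀ a ∈ Set.Icc (-M) M, ∀ b ∈ Set.Icc (-M) M, |f a - f b| ≤ L * |a - b| := by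
  obtain ⟨L, hL⟩ := (isCompact_Icc (a := -M) (b := M)).exists_bound_of_continuousOn
      (hf.continuous_deriv le_rfl).continuousOn
  refine ⟨max L 0, le_max_right _ _, fun a ha b hb => ?_⟩
  have h := Convex.norm_image_sub_le_of_norm_hasDerivWithin_le
    (f := f) (f' := deriv f) (s := Set.Icc (-M) M) (C := max L 0)
    (fun x _ => ((hf.differentiable one_ne_zero).differentiableAt.hasDerivAt).hasDerivWithinAt)
    (fun x hx => le_trans (hL x hx) (le_max_left _ _)) (convex_Icc _ _) hb ha
  simpa [Real.norm_eq_abs] using h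

abbrev Eu (N : ℕ) := EuclideanSpace ℝ (Fin N)


/-- Generalized Stroock–Varopoulos inequality for the approximated fractional Laplacian:
if `ψ' = (Ψ')²` with `ψ(0) = Ψ(0) = 0`, then
`∫ ψ(u(x)) L_ε u(x) dx ≥ ½ ∫∫ (Ψ(u(x)) − Ψ(u(y)))² J_ε(x−y) dx dy`. -/
theorem generalized_stroock_varopoulos_approx
    (N : ℕ) (hN : 1 ≤ N) (s ε C : ℝ) (hs : s ∈ Set.Ioo (0 : ℝ) 1)
    (hε : 0 < ε) (hC : 0 < C)
    (u : EuclideanSpace ℝ (Fin N) → ℝ)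
    (hu_meas : Measurable u) (hu1 : Integrable u) (huinf : MemLp u ⊤)
    (ψ Ψ : ℝ → ℝ) (hψ : ContDiff ℝ 1 ψ) (hΨ : ContDiff ℝ 1 Ψ)
    (hψ0 : ψ 0 = 0) (hΨ0 : Ψ 0 = 0)
    (hder : ∀ z : ℝ, deriv ψ z = (deriv Ψ z) ^ 2) :
    (1 / 2) *
        (∫ p : EuclideanSpace ℝ (Fin N) × EuclideanSpace ℝ (Fin N),
          (Ψ (u p.1) - Ψ (u p.2)) ^ 2 *
            (C * (‖p.1 - p.2‖ ^ 2 + ε ^ 2) ^ (-(((N : ℝ) + 2 * s) / 2)))) ≤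
      ∫ x : EuclideanSpace ℝ (Fin N),
        ψ (u x) *
          ∫ y : EuclideanSpace ℝ (Fin N),
            (u x - u y) * (C * (‖x - y‖ ^ 2 + ε ^ 2) ^ (-(((N : ℝ) + 2 * s) / 2))) := by
  set K : Eu N → ℝ := fun z => C * (‖z‖ ^ 2 + ε ^ 2) ^ (-(((N : ℝ) + 2 * s) / 2)) with hKdef
  -- kernel facts
  have hp : (N : ℝ) < (N : ℝ) + 2 * s := by have := hs.1; linarith
  have hps : 0 < (N : ℝ) + 2 * s := lt_of_le_of_lt (Nat.cast_nonneg N) hp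
  have hK_int : Integrable K := (my_kernel_integrable N ((N : ℝ) + 2 * s) ε hp hε).const_mul C
  have hK_nonneg : ∀ z, 0 ≤ K z := by
    intro z
    have : (0:ℝ) < ‖z‖ ^ 2 + ε ^ 2 := by positivity
    exact mul_nonneg hC.le (Real.rpow_nonneg this.le _)
  have hK_cont : Continuous K := by
    apply Continuous.mul continuous_const
    have hcont : Continuous fun z : Eu N => ‖z‖ ^ 2 + ε ^ 2 := by fun_prop
    exact hcont.rpow_const (fun z => Or.inl (by positivity))
  have hK_meas : Measurable K := hK_cont.measurable
  set B : ℝ := C * (ε ^ 2) ^ (-(((N : ℝ) + 2 * s) / 2)) with hBdef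
  have hK_le : ∀ z, K z ≤ B := by
    intro z
    refine mul_le_mul_of_nonneg_left ?_ hC.le
    exact Real.rpow_le_rpow_of_nonpos (by positivity) (by nlinarith [sq_nonneg ‖z‖]) (by linarith)
  have hB0 : 0 ≤ B := le_trans (hK_nonneg 0) (hK_le 0)
  have hK_symm : ∀ x y : Eu N, K (y - x) = K (x - y) := by
    intro x y; simp only [hKdef, norm_sub_rev]
  -- essential bound on u
  set M : ℝ := (eLpNorm u ⊤ volume).toReal with hMdef
  have hM0 : 0 ≤ M := ENNReal.toReal_nonneg
  have hMae : ∀ᵐ x : Eu N, |u x| ≤ M := by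
    have hne : eLpNormEssSup u (volume : Measure (Eu N)) ≠ ⊤ := by
      rw [← eLpNorm_exponent_top]; exact huinf.2.ne
    filter_upwards [ae_le_eLpNormEssSup (f := u) (μ := (volume : Measure (Eu N)))] with x hx
    have h2 := ENNReal.toReal_mono hne hx
    simpa [hMdef, eLpNorm_exponent_top, Real.norm_eq_abs] using h2
  -- Lipschitz bounds for ψ, Ψ composed with u
  obtain ⟨Lψ, hLψ0, hLψ⟩ := my_lip ψ hψ M
  have h0mem : (0:ℝ) ∈ Set.Icc (-M) M := ⟨by linarith, hM0⟩
  have humem : ∀ᵐ x : Eu N, u x ∈ Set.Icc (-M) M := by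
    filter_upwards [hMae] with x hx
    exact ⟨neg_le_of_abs_le hx, le_of_abs_le hx⟩
  have hψu_bd : ∀ᵐ x : Eu N, |ψ (u x)| ≤ Lψ * |u x| := by
    filter_upwards [humem] with x hx
    simpa [hψ0] using hLψ (u x) hx 0 h0mem
  have hψu_meas : AEStronglyMeasurable (fun x : Eu N => ψ (u x)) volume :=
    (hψ.continuous.measurable.comp hu_meas).aestronglyMeasurable
  have hψu_int : Integrable (fun x : Eu N => ψ (u x)) := by
    refine (hu1.abs.const_mul Lψ).mono' hψu_meas ?_
    filter_upwards [hψu_bd] with x hx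
    simpa [Real.norm_eq_abs] using hx
  have hq_int : Integrable (fun x : Eu N => ψ (u x) * u x) := by
    refine (hu1.abs.const_mul (Lψ * M)).mono' (hψu_meas.mul hu_meas.aestronglyMeasurable) ?_
    filter_upwards [hψu_bd, hMae] with x hx hMx
    have : |ψ (u x)| ≤ Lψ * M :=
      le_trans hx (mul_le_mul_of_nonneg_left hMx hLψ0)
    calc ‖ψ (u x) * u x‖ = |ψ (u x)| * |u x| := by rw [Real.norm_eq_abs, abs_mul]
      _ ≤ (Lψ * M) * |u x| := mul_le_mul_of_nonneg_right this (abs_nonneg _)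
  -- product integrability
  set F : Eu N × Eu N → ℝ := fun q => ψ (u q.1) * ((u q.1 - u q.2) * K (q.1 - q.2)) with hFdef
  have hF1 : Integrable (fun q : Eu N × Eu N => (ψ (u q.1) * u q.1) * K (q.1 - q.2))
      (volume.prod volume) := my_prod_integrable N _ K hq_int hK_int hK_meas
  have hF2meas : AEStronglyMeasurable (fun q : Eu N × Eu N => ψ (u q.1) * u q.2 * K (q.1 - q.2))
      (volume.prod volume) := by
    apply Measurable.aestronglyMeasurable
    exact ((hψ.continuous.measurable.comp (hu_meas.comp measurable_fst)).mul
      (hu_meas.comp measurable_snd)).mul (hK_meas.comp (measurable_fst.sub measurable_snd))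
  have hF2 : Integrable (fun q : Eu N × Eu N => ψ (u q.1) * u q.2 * K (q.1 - q.2))
      (volume.prod volume) := by
    refine ((hψu_int.abs.mul_prod hu1.abs).const_mul B).mono' hF2meas ?_
    refine Filter.Eventually.of_forall fun q => ?_
    have h1 : ‖ψ (u q.1) * u q.2 * K (q.1 - q.2)‖
        = |ψ (u q.1)| * |u q.2| * K (q.1 - q.2) := by
      rw [Real.norm_eq_abs, abs_mul, abs_mul, abs_of_nonneg (hK_nonneg _)]
    rw [h1]
    calc |ψ (u q.1)| * |u q.2| * K (q.1 - q.2) ≤ |ψ (u q.1)| * |u q.2| * B :=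
          mul_le_mul_of_nonneg_left (hK_le _) (by positivity)
      _ = B * (|ψ (u q.1)| * |u q.2|) := by ring
  have hF_int : Integrable F (volume.prod volume) := by
    have heq : F = fun q : Eu N × Eu N =>
        (ψ (u q.1) * u q.1) * K (q.1 - q.2) - ψ (u q.1) * u q.2 * K (q.1 - q.2) := by
      funext q; simp only [hFdef]; ring
    rw [heq]; exact hF1.sub hF2
  have hFsw_int : Integrable (fun q : Eu N × Eu N => F (q.2, q.1)) (volume.prod volume) := hF_int.swap
  set G : Eu N × Eu N → ℝ := fun q => (ψ (u q.1) - ψ (u q.2)) * (u q.1 - u q.2) * K (q.1 - q.2)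
    with hGdef
  have hGeq : ∀ q : Eu N × Eu N, G q = F q + F (q.2, q.1) := by
    intro q
    simp only [hGdef, hFdef]
    rw [hK_symm q.2 q.1]
    ring
  have hG_int : Integrable G (volume.prod volume) := by
    refine (hF_int.add hFsw_int).congr (Filter.Eventually.of_forall fun q => (hGeq q).symm)
  set g : Eu N × Eu N → ℝ := fun q => (Ψ (u q.1) - Ψ (u q.2)) ^ 2 * K (q.1 - q.2) with hgdef
  have hg_le : ∀ q : Eu N × Eu N, g q ≤ G q := by
    intro q
    simp only [hgdef, hGdef]
    exact mul_le_mul_of_nonneg_right (my_key ψ Ψ hψ hΨ hder (u q.1) (u q.2)) (hK_nonneg _)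
  have hg_nonneg : ∀ q : Eu N × Eu N, 0 ≤ g q := fun q =>
    mul_nonneg (sq_nonneg _) (hK_nonneg _)
  have hg_meas : AEStronglyMeasurable g (volume.prod volume) := by
    apply Measurable.aestronglyMeasurable
    exact (((hΨ.continuous.measurable.comp (hu_meas.comp measurable_fst)).sub
      (hΨ.continuous.measurable.comp (hu_meas.comp measurable_snd))).pow_const 2).mul
      (hK_meas.comp (measurable_fst.sub measurable_snd))
  have hg_int : Integrable g (volume.prod volume) := by
    refine hG_int.mono' hg_meas (Filter.Eventually.of_forall fun q => ?_)
    rw [Real.norm_eq_abs, abs_of_nonneg (hg_nonneg q)]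
    exact hg_le q
  -- Fubini for the right-hand side
  have hRHS : (∫ x : Eu N, ψ (u x) * ∫ y : Eu N, (u x - u y) * K (x - y))
      = ∫ q : Eu N × Eu N, F q ∂(volume.prod volume) := by
    have h1 : (∫ x : Eu N, ψ (u x) * ∫ y : Eu N, (u x - u y) * K (x - y))
        = ∫ x : Eu N, ∫ y : Eu N, ψ (u x) * ((u x - u y) * K (x - y)) := by
      refine integral_congr_ae (Filter.Eventually.of_forall fun x => ?_)
      exact (integral_const_mul (ψ (u x)) fun y => (u x - u y) * K (x - y)).symm
    rw [h1]
    exact MeasureTheory.integral_integral hF_int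
  have hswap_eq : (∫ q : Eu N × Eu N, F (q.2, q.1) ∂(volume.prod volume))
      = ∫ q : Eu N × Eu N, F q ∂(volume.prod volume) := MeasureTheory.integral_prod_swap F
  have hGF : (∫ q : Eu N × Eu N, G q ∂(volume.prod volume))
      = 2 * ∫ q : Eu N × Eu N, F q ∂(volume.prod volume) := by
    calc (∫ q : Eu N × Eu N, G q ∂(volume.prod volume))
        = ∫ q : Eu N × Eu N, (F q + F (q.2, q.1)) ∂(volume.prod volume) :=
          integral_congr_ae (Filter.Eventually.of_forall fun q => hGeq q)
      _ = (∫ q : Eu N × Eu N, F q ∂(volume.prod volume))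
          + ∫ q : Eu N × Eu N, F (q.2, q.1) ∂(volume.prod volume) :=
          integral_add hF_int hFsw_int
      _ = 2 * ∫ q : Eu N × Eu N, F q ∂(volume.prod volume) := by rw [hswap_eq]; ring
  have hmono : (∫ q : Eu N × Eu N, g q ∂(volume.prod volume))
      ≤ ∫ q : Eu N × Eu N, G q ∂(volume.prod volume) := integral_mono hg_int hG_int hg_le
  have hgoal : (1 / 2 : ℝ) * (∫ q : Eu N × Eu N, g q ∂(volume.prod volume))
      ≤ ∫ x : Eu N, ψ (u x) * ∫ y : Eu N, (u x - u y) * K (x - y) := by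
    rw [hRHS]
    nlinarith [hmono, hGF]
  rw [MeasureTheory.Measure.volume_eq_prod]
  exact hgoal
end

section
/- (Classical Stroock–Varopoulos inequality for the approximated fractional Laplacian.) Let N ≥ 1, s ∈ (0,1), ε > 0, q > 1, and let J_ε(z) = C·(‖z‖² + ε²)^{−(N+2s)/2} with C > 0. Let u : ℝ^N → [0,∞) be measurable with u ∈ L¹(ℝ^N) ∩ L^∞(ℝ^N), and define L_ε u(x) = ∫_{ℝ^N} (u(x) − u(y)) J_ε(x−y) dy. Then ∫_{ℝ^N} u(x)^{q−1}·L_ε u(x) dx ≥ (4(q−1)/q²)·(1/2)·∫∫_{ℝ^N×ℝ^N} (u(x)^{q/2} − u(y)^{q/2})²·J_ε(x−y) dx dy. -/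
open MeasureTheory intervalIntegral
open scoped ENNReal NNReal

/-- Cauchy–Schwarz on [1,t] for powers. -/
lemma sv_key (q t : ℝ) (hq : 1 < q) (ht : 1 ≤ t) :
    4 * (q - 1) / q ^ 2 * (t ^ (q / 2) - 1) ^ 2 ≤ (t - 1) * (t ^ (q - 1) - 1) := by
  rcases eq_or_lt_of_le ht with rfl | ht'
  · simp
  have hq0 : (0:ℝ) < q := by linarith
  -- integrals
  have hint1 : IntervalIntegrable (fun s : ℝ => s ^ (q - 2)) volume 1 t :=
    intervalIntegral.intervalIntegrable_rpow (Or.inr (by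
      rw [Set.mem_uIcc]; push_neg; constructor <;> intro h <;> linarith))
  have hint2 : IntervalIntegrable (fun s : ℝ => s ^ ((q - 2) / 2)) volume 1 t :=
    intervalIntegral.intervalIntegrable_rpow (Or.inr (by
      rw [Set.mem_uIcc]; push_neg; constructor <;> intro h <;> linarith))
  set P := ∫ s in (1:ℝ)..t, s ^ (q - 2) with hP
  set R := ∫ s in (1:ℝ)..t, s ^ ((q - 2) / 2) with hR
  have hPval : P = (t ^ (q - 1) - 1) / (q - 1) := by
    rw [hP, integral_rpow (Or.inl (by linarith)), show q - 2 + 1 = q - 1 by ring, Real.one_rpow]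
  have hRval : R = (t ^ (q / 2) - 1) / (q / 2) := by
    rw [hR, integral_rpow (Or.inl (by linarith))]
    rw [show (q - 2)/2 + 1 = q / 2 by ring, Real.one_rpow]
  set lam : ℝ := R / (t - 1) with hlam
  have hQpos : (0:ℝ) < t - 1 := by linarith
  -- expand the square integral
  have hsq : (0:ℝ) ≤ P - 2 * lam * R + lam ^ 2 * (t - 1) := by
    have hexp : ∀ s ∈ Set.uIcc (1:ℝ) t,
        (s ^ ((q - 2) / 2) - lam) ^ 2 = s ^ (q - 2) - 2 * lam * s ^ ((q - 2) / 2) + lam ^ 2 := by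
      intro s hs
      rw [Set.uIcc_of_le ht] at hs
      have hs1 : (1:ℝ) ≤ s := hs.1
      have hs0 : (0:ℝ) ≤ s := by linarith
      have : (s ^ ((q - 2) / 2)) ^ 2 = s ^ (q - 2) := by
        rw [← Real.rpow_natCast (s ^ ((q-2)/2)) 2, ← Real.rpow_mul hs0]
        norm_num
      nlinarith [this]
    have hnn : (0:ℝ) ≤ ∫ s in (1:ℝ)..t, (s ^ ((q - 2) / 2) - lam) ^ 2 := by
      apply intervalIntegral.integral_nonneg ht
      intro s _; positivity
    have heq : (∫ s in (1:ℝ)..t, (s ^ ((q - 2) / 2) - lam) ^ 2)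
        = P - 2 * lam * R + lam ^ 2 * (t - 1) := by
      rw [intervalIntegral.integral_congr hexp]
      rw [intervalIntegral.integral_add (hint1.sub ((hint2.const_mul (2*lam)))) intervalIntegrable_const]
      rw [intervalIntegral.integral_sub hint1 (hint2.const_mul (2*lam))]
      rw [intervalIntegral.integral_const_mul]
      simp [hP, hR]
      ring
    linarith [heq ▸ hnn]
  -- from the quadratic: R^2 ≤ P (t-1)
  have hRP : R ^ 2 ≤ P * (t - 1) := by
    have : P - 2 * (R / (t-1)) * R + (R/(t-1)) ^ 2 * (t - 1) = P - R ^ 2 / (t - 1) := by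
      field_simp; ring
    rw [hlam, this] at hsq
    have h' : (P - R^2/(t-1)) * (t-1) = P * (t-1) - R^2 := by field_simp
    nlinarith [mul_nonneg hsq hQpos.le]
  -- conclude
  have h1 : t ^ (q - 1) - 1 = (q - 1) * P := by
    rw [hPval, mul_div_cancel₀ _ (by linarith : q - 1 ≠ 0)]
  have h2 : t ^ (q / 2) - 1 = (q / 2) * R := by
    rw [hRval, mul_div_cancel₀ _ (by positivity : q / 2 ≠ 0)]
  rw [h1, h2]
  have : 4 * (q - 1) / q ^ 2 * (q / 2 * R) ^ 2 = (q - 1) * R ^ 2 := by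
    field_simp; ring
  rw [this]
  calc (q - 1) * R ^ 2 ≤ (q - 1) * (P * (t - 1)) := by
        apply mul_le_mul_of_nonneg_left hRP; linarith
  _ = (t - 1) * ((q - 1) * P) := by ring

lemma sv_pointwise (q : ℝ) (hq : 1 < q) : ∀ a b : ℝ, 0 ≤ a → 0 ≤ b → b ≤ a →
    4 * (q - 1) / q ^ 2 * (a ^ (q / 2) - b ^ (q / 2)) ^ 2 ≤ (a - b) * (a ^ (q - 1) - b ^ (q - 1)) := by
  intro a b ha hb hba
  have hq0 : (0:ℝ) < q := by linarith
  rcases hb.eq_or_lt with rfl | hb'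
  · -- b = 0
    rcases ha.eq_or_lt with rfl | ha'
    · simp
    · have h0 : (0:ℝ) ^ (q/2) = 0 := Real.zero_rpow (by positivity)
      have h1 : (0:ℝ) ^ (q-1) = 0 := Real.zero_rpow (by linarith : (0:ℝ) < q-1).ne'
      have e3 : (a ^ (q/2)) ^ 2 = a ^ q := by
        rw [← Real.rpow_natCast (a ^ (q/2)) 2, ← Real.rpow_mul ha]; norm_num
      have e4 : a * a ^ (q-1) = a ^ q := by
        nth_rewrite 1 [← Real.rpow_one a]
        rw [← Real.rpow_add ha', show 1 + (q-1) = q by ring]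
      have hk : 4 * (q-1)/q^2 ≤ 1 := by
        rw [div_le_one (by positivity)]; nlinarith [sq_nonneg (q-2)]
      have haq : (0:ℝ) ≤ a ^ q := Real.rpow_nonneg ha q
      simp only [h0, h1, sub_zero]
      rw [e3, e4]
      nlinarith [mul_le_mul_of_nonneg_right hk haq]
  · -- b > 0
    set t := a / b with hT
    have ht : 1 ≤ t := (one_le_div hb').mpr hba
    have hat : a = b * t := by rw [hT, mul_div_cancel₀ _ hb'.ne']
    have key := sv_key q t hq ht
    have e1 : a ^ (q/2) = b ^ (q/2) * t ^ (q/2) := by rw [hat, Real.mul_rpow hb'.le (by positivity)]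
    have e2 : a ^ (q-1) = b ^ (q-1) * t ^ (q-1) := by rw [hat, Real.mul_rpow hb'.le (by positivity)]
    have e3 : (b ^ (q/2)) ^ 2 = b ^ q := by
      rw [← Real.rpow_natCast (b ^ (q/2)) 2, ← Real.rpow_mul hb'.le]; norm_num
    have e4 : b * b ^ (q-1) = b ^ q := by
      nth_rewrite 1 [← Real.rpow_one b]
      rw [← Real.rpow_add hb', show 1 + (q-1) = q by ring]
    have hbq : (0:ℝ) ≤ b ^ q := Real.rpow_nonneg hb'.le q
    have lhs_eq : (a ^ (q/2) - b ^ (q/2)) ^ 2 = b ^ q * (t ^ (q/2) - 1) ^ 2 := by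
      rw [e1, ← e3]; ring
    have rhs_eq : (a - b) * (a ^ (q-1) - b ^ (q-1)) = b ^ q * ((t - 1) * (t ^ (q-1) - 1)) := by
      rw [e2, hat, ← e4]; ring
    rw [lhs_eq, rhs_eq]
    calc 4 * (q-1)/q^2 * (b ^ q * (t ^ (q/2) - 1)^2)
        = b ^ q * (4*(q-1)/q^2 * (t ^ (q/2)-1)^2) := by ring
      _ ≤ b ^ q * ((t-1)*(t^(q-1)-1)) := mul_le_mul_of_nonneg_left key hbq

lemma sv_pointwise' (q : ℝ) (hq : 1 < q) (a b : ℝ) (ha : 0 ≤ a) (hb : 0 ≤ b) :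
    4 * (q - 1) / q ^ 2 * (a ^ (q / 2) - b ^ (q / 2)) ^ 2
      ≤ (a - b) * (a ^ (q - 1) - b ^ (q - 1)) := by
  rcases le_total b a with h | h
  · exact sv_pointwise q hq a b ha hb h
  · have := sv_pointwise q hq b a hb ha h
    nlinarith [this]

/-- Classical Stroock–Varopoulos inequality for the approximated fractional Laplacian:
for `q > 1` and `u ≥ 0` in `L¹ ∩ L^∞`,
`∫ u^{q−1} L_ε u dx ≥ (4(q−1)/q²) · ½ ∫∫ (u(x)^{q/2} − u(y)^{q/2})² J_ε(x−y) dx dy`. -/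
theorem classical_stroock_varopoulos_approx
    (N : ℕ) (hN : 1 ≤ N) (s ε C q : ℝ) (hs : s ∈ Set.Ioo (0 : ℝ) 1)
    (hε : 0 < ε) (hC : 0 < C) (hq : 1 < q)
    (u : EuclideanSpace ℝ (Fin N) → ℝ) (hu_nonneg : ∀ x, 0 ≤ u x)
    (hu_meas : Measurable u) (hu1 : Integrable u) (huinf : MemLp u ⊤) :
    4 * (q - 1) / q ^ 2 *
        ((1 / 2) *
          ∫ p : EuclideanSpace ℝ (Fin N) × EuclideanSpace ℝ (Fin N),
            (u p.1 ^ (q / 2) - u p.2 ^ (q / 2)) ^ 2 *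
              (C * (‖p.1 - p.2‖ ^ 2 + ε ^ 2) ^ (-(((N : ℝ) + 2 * s) / 2)))) ≤
      ∫ x : EuclideanSpace ℝ (Fin N),
        u x ^ (q - 1) *
          ∫ y : EuclideanSpace ℝ (Fin N),
            (u x - u y) * (C * (‖x - y‖ ^ 2 + ε ^ 2) ^ (-(((N : ℝ) + 2 * s) / 2))) := by
  obtain ⟨hs0, hs1⟩ := hs
  have hq1 : (0:ℝ) < q - 1 := by linarith
  set κ : ℝ := 4 * (q - 1) / q ^ 2 with hκdef
  have hκ : 0 < κ := by positivity
  set J : EuclideanSpace ℝ (Fin N) → ℝ :=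
    fun z => C * (‖z‖ ^ 2 + ε ^ 2) ^ (-(((N : ℝ) + 2 * s) / 2)) with hJdef
  have hJpos : ∀ z, 0 < J z := by
    intro z
    have : (0:ℝ) < ‖z‖ ^ 2 + ε ^ 2 := by positivity
    exact mul_pos hC (Real.rpow_pos_of_pos this _)
  have hJmeas : Measurable J := by
    rw [hJdef]; fun_prop
  -- integrability of J
  have hJint : Integrable J := by
    have hr : ((Module.finrank ℝ (EuclideanSpace ℝ (Fin N))) : ℝ) < (N : ℝ) + 2 * s := by
      rw [finrank_euclideanSpace_fin]
      nlinarith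
    have base : Integrable (fun z : EuclideanSpace ℝ (Fin N) =>
        ((1:ℝ) + ‖z‖ ^ 2) ^ (-((N : ℝ) + 2 * s) / 2)) :=
      integrable_rpow_neg_one_add_norm_sq hr
    set m : ℝ := min 1 (ε ^ 2) with hmdef
    have hm : 0 < m := lt_min one_pos (by positivity)
    refine ((base.const_mul (C * m ^ (-(((N : ℝ) + 2 * s) / 2)))).mono'
      hJmeas.aestronglyMeasurable (Filter.Eventually.of_forall fun z => ?_))
    have h1 : m * (1 + ‖z‖ ^ 2) ≤ ‖z‖ ^ 2 + ε ^ 2 := by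
      have h2 : m ≤ 1 := min_le_left _ _
      have h3 : m ≤ ε ^ 2 := min_le_right _ _
      nlinarith [sq_nonneg ‖z‖]
    have h0 : (0:ℝ) < m * (1 + ‖z‖ ^ 2) := by positivity
    have hb : (‖z‖ ^ 2 + ε ^ 2) ^ (-(((N : ℝ) + 2 * s) / 2))
        ≤ (m * (1 + ‖z‖ ^ 2)) ^ (-(((N : ℝ) + 2 * s) / 2)) := by
      apply Real.rpow_le_rpow_of_nonpos h0 h1
      have : (0:ℝ) < ((N : ℝ) + 2 * s) / 2 := by positivity
      linarith
    rw [Real.norm_eq_abs, abs_of_nonneg (hJpos z).le]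
    have hmr : (m * (1 + ‖z‖ ^ 2)) ^ (-(((N : ℝ) + 2 * s) / 2))
        = m ^ (-(((N : ℝ) + 2 * s) / 2)) * ((1:ℝ) + ‖z‖ ^ 2) ^ (-((N : ℝ) + 2 * s) / 2) := by
      rw [Real.mul_rpow hm.le (by positivity), neg_div]
    calc J z ≤ C * (m * (1 + ‖z‖ ^ 2)) ^ (-(((N : ℝ) + 2 * s) / 2)) :=
          mul_le_mul_of_nonneg_left hb hC.le
      _ = C * m ^ (-(((N : ℝ) + 2 * s) / 2)) * ((1:ℝ) + ‖z‖ ^ 2) ^ (-((N : ℝ) + 2 * s) / 2) := by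
          rw [hmr]; ring
  -- essential sup bound
  set M : ℝ := (eLpNormEssSup u volume).toReal with hMdef
  have hMfin : eLpNormEssSup u volume ≠ ⊤ := by
    have := huinf.2
    rw [eLpNorm_exponent_top] at this
    exact this.ne
  have hMae : ∀ᵐ x, u x ≤ M := by
    filter_upwards [ae_le_eLpNormEssSup (f := u) (μ := volume)] with x hx
    have h2 : (‖u x‖₊ : ℝ≥0∞).toReal ≤ M := ENNReal.toReal_mono hMfin hx
    rw [ENNReal.coe_toReal, coe_nnnorm, Real.norm_eq_abs] at h2
    exact (le_abs_self _).trans h2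
  -- abbreviations on the product space
  set F : EuclideanSpace ℝ (Fin N) × EuclideanSpace ℝ (Fin N) → ℝ :=
    fun p => u p.1 ^ (q - 1) * ((u p.1 - u p.2) * J (p.1 - p.2)) with hFdef
  set G : EuclideanSpace ℝ (Fin N) × EuclideanSpace ℝ (Fin N) → ℝ :=
    fun p => (u p.1 ^ (q / 2) - u p.2 ^ (q / 2)) ^ 2 * J (p.1 - p.2) with hGdef
  have hFm : Measurable F := by
    apply Measurable.mul
    · exact (hu_meas.comp measurable_fst).pow measurable_const
    · exact ((hu_meas.comp measurable_fst).sub (hu_meas.comp measurable_snd)).mul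
        (hJmeas.comp (measurable_fst.sub measurable_snd))
  have hGm : Measurable G := by
    apply Measurable.mul
    · exact (((hu_meas.comp measurable_fst).pow measurable_const).sub
        ((hu_meas.comp measurable_snd).pow measurable_const)).pow measurable_const
    · exact hJmeas.comp (measurable_fst.sub measurable_snd)
  -- integrability of the two model kernels on the product
  have hKmul : Integrable (fun p : EuclideanSpace ℝ (Fin N) × EuclideanSpace ℝ (Fin N) =>
      u p.1 * J p.2) (volume.prod volume) := hu1.mul_prod hJint
  have hT1 : MeasurePreserving
      (fun z : EuclideanSpace ℝ (Fin N) × EuclideanSpace ℝ (Fin N) => (z.1, z.1 - z.2))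
      (volume.prod volume) (volume.prod volume) := by
    have h1 := measurePreserving_prod_sub (volume : Measure (EuclideanSpace ℝ (Fin N))) volume
    have h2 : MeasurePreserving
        (Prod.map (id : EuclideanSpace ℝ (Fin N) → EuclideanSpace ℝ (Fin N))
          (Neg.neg : EuclideanSpace ℝ (Fin N) → EuclideanSpace ℝ (Fin N)))
        (volume.prod volume) (volume.prod volume) :=
      (MeasurePreserving.id volume).prod (Measure.measurePreserving_neg volume)
    have h3 := h2.comp h1
    convert h3 using 1
    funext z
    simp [Prod.map, neg_sub]
  have hK1 : Integrable (fun p : EuclideanSpace ℝ (Fin N) × EuclideanSpace ℝ (Fin N) =>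
      u p.1 * J (p.1 - p.2)) (volume.prod volume) := by
    have h := (hT1.integrable_comp hKmul.aestronglyMeasurable).mpr hKmul
    simpa [Function.comp_def] using h
  have hT2 := measurePreserving_prod_sub_swap (volume : Measure (EuclideanSpace ℝ (Fin N))) volume
  have hK2 : Integrable (fun p : EuclideanSpace ℝ (Fin N) × EuclideanSpace ℝ (Fin N) =>
      u p.2 * J (p.1 - p.2)) (volume.prod volume) := by
    have h := (hT2.integrable_comp hKmul.aestronglyMeasurable).mpr hKmul
    simpa [Function.comp_def] using h
  have hMae2 : ∀ᵐ p : EuclideanSpace ℝ (Fin N) × EuclideanSpace ℝ (Fin N)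
      ∂(volume.prod volume), u p.1 ≤ M :=
    Measure.quasiMeasurePreserving_fst.tendsto_ae.eventually hMae
  have hM0 : (0:ℝ) ≤ M := ENNReal.toReal_nonneg
  have hFint : Integrable F (volume.prod volume) := by
    refine ((hK1.const_mul (M ^ (q - 1))).add (hK2.const_mul (M ^ (q - 1)))).mono'
      hFm.aestronglyMeasurable ?_
    filter_upwards [hMae2] with p hp
    have hu1p := hu_nonneg p.1
    have hu2p := hu_nonneg p.2
    have hJp := (hJpos (p.1 - p.2)).le
    have hrb : u p.1 ^ (q - 1) ≤ M ^ (q - 1) := Real.rpow_le_rpow hu1p hp (by linarith)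
    have habs : |u p.1 - u p.2| ≤ u p.1 + u p.2 := abs_le.mpr ⟨by linarith, by linarith⟩
    calc ‖F p‖ = u p.1 ^ (q - 1) * (|u p.1 - u p.2| * J (p.1 - p.2)) := by
          simp only [hFdef, Real.norm_eq_abs, abs_mul]
          rw [abs_of_nonneg (Real.rpow_nonneg hu1p _), abs_of_nonneg hJp]
      _ ≤ M ^ (q - 1) * ((u p.1 + u p.2) * J (p.1 - p.2)) :=
          mul_le_mul hrb (mul_le_mul_of_nonneg_right habs hJp) (by positivity)
            (Real.rpow_nonneg hM0 _)
      _ = M ^ (q - 1) * (u p.1 * J (p.1 - p.2)) + M ^ (q - 1) * (u p.2 * J (p.1 - p.2)) := by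
          ring
  have hFswap : Integrable (fun p : EuclideanSpace ℝ (Fin N) × EuclideanSpace ℝ (Fin N) =>
      F p.swap) (volume.prod volume) := by
    have h := ((Measure.measurePreserving_swap (μ := (volume : Measure (EuclideanSpace ℝ (Fin N)))) (ν := volume)).integrable_comp hFint.aestronglyMeasurable).mpr hFint
    simpa [Function.comp_def] using h
  have hGpt : ∀ p : EuclideanSpace ℝ (Fin N) × EuclideanSpace ℝ (Fin N),
      κ * G p ≤ F p + F p.swap := by
    intro p
    have key := sv_pointwise' q hq (u p.1) (u p.2) (hu_nonneg _) (hu_nonneg _)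
    have hJp := (hJpos (p.1 - p.2)).le
    have h := mul_le_mul_of_nonneg_right key hJp
    have e1 : F p + F p.swap
        = ((u p.1 - u p.2) * (u p.1 ^ (q - 1) - u p.2 ^ (q - 1))) * J (p.1 - p.2) := by
      simp only [hFdef, Prod.fst_swap, Prod.snd_swap]
      have hJsymm : J (p.2 - p.1) = J (p.1 - p.2) := by
        simp only [hJdef]
        rw [show p.2 - p.1 = -(p.1 - p.2) by abel, norm_neg]
      rw [hJsymm]; ring
    have e2 : κ * G p = (κ * (u p.1 ^ (q / 2) - u p.2 ^ (q / 2)) ^ 2) * J (p.1 - p.2) := by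
      simp only [hGdef]; ring
    rw [e1, e2, hκdef]
    exact h
  have hGnn : ∀ p, 0 ≤ G p := fun p => mul_nonneg (sq_nonneg _) (hJpos _).le
  have hGint : Integrable G (volume.prod volume) := by
    refine ((hFint.add hFswap).const_mul κ⁻¹).mono' hGm.aestronglyMeasurable
      (Filter.Eventually.of_forall fun p => ?_)
    rw [Real.norm_eq_abs, abs_of_nonneg (hGnn p)]
    have h := mul_le_mul_of_nonneg_left (hGpt p) (inv_nonneg.mpr hκ.le)
    rw [← mul_assoc, inv_mul_cancel₀ hκ.ne', one_mul] at h
    exact h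
  have hswap_eq : (∫ p, F p.swap ∂(volume.prod volume)) = ∫ p, F p ∂(volume.prod volume) :=
    (Measure.measurePreserving_swap (μ := (volume : Measure (EuclideanSpace ℝ (Fin N)))) (ν := volume)).integral_comp
      MeasurableEquiv.prodComm.measurableEmbedding F
  have hmono : (∫ p, κ * G p ∂(volume.prod volume))
      ≤ ∫ p, (F p + F p.swap) ∂(volume.prod volume) :=
    integral_mono (hGint.const_mul κ) (hFint.add hFswap) hGpt
  rw [MeasureTheory.integral_const_mul, integral_add hFint hFswap, hswap_eq] at hmono
  -- identify the right-hand side with the product integral of F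
  have h1 : ∀ x, (u x ^ (q - 1) *
      ∫ y, (u x - u y) * (C * (‖x - y‖ ^ 2 + ε ^ 2) ^ (-(((N : ℝ) + 2 * s) / 2))))
      = ∫ y, F (x, y) := by
    intro x
    rw [← MeasureTheory.integral_const_mul]
  have hRHS : (∫ x, u x ^ (q - 1) *
      ∫ y, (u x - u y) * (C * (‖x - y‖ ^ 2 + ε ^ 2) ^ (-(((N : ℝ) + 2 * s) / 2))))
      = ∫ p, F p ∂(volume.prod volume) := by
    simp_rw [h1]
    exact integral_integral hFint
  have hLHS : (∫ p : EuclideanSpace ℝ (Fin N) × EuclideanSpace ℝ (Fin N),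
      (u p.1 ^ (q / 2) - u p.2 ^ (q / 2)) ^ 2 *
        (C * (‖p.1 - p.2‖ ^ 2 + ε ^ 2) ^ (-(((N : ℝ) + 2 * s) / 2))))
      = ∫ p, G p ∂(volume.prod volume) := by
    rw [Measure.volume_eq_prod]
  rw [hRHS, hLHS]
  linarith [hmono]
end

section
/- Let H be a separable real Hilbert space and T a finite positive real number. Let (u_n) be a sequence of functions in L²((0,T); H) such that: (1) for almost every t ∈ (0,T), sup_n ‖u_n(t)‖_H < ∞; (2) u_n converges weakly to u in L²((0,T); H) (that is, for every v ∈ L²((0,T); H), ∫₀^T ⟨u_n(t), v(t)⟩_H dt → ∫₀^T ⟨u(t), v(t)⟩_H dt); (3) there exists a countable set D dense in H such that for every ψ ∈ D the sequence of functions g_n^ψ(t) = ⟨u_n(t), ψ⟩_H has relatively compact closure in L¹((0,T)). Then there exists a subsequence (u_{n_k}) such that for almost every t ∈ (0,T), u_{n_k}(t) converges weakly to u(t) in H. -/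
open MeasureTheory Filter
open scoped RealInnerProductSpace Topology

set_option maxHeartbeats 1000000
set_option synthInstance.maxHeartbeats 400000

/-- Rakotoson–Temam lemma: if `uₙ ⇀ u` weakly in `L²((0,T);H)`, with
`sup_n ‖uₙ(t)‖ < ∞` for a.e. `t`, and for every `ψ` in a countable dense subset
of `H` the functions `t ↦ ⟨uₙ(t), ψ⟩` form a relatively compact family in
`L¹((0,T))`, then a subsequence satisfies `uₙ(t) ⇀ u(t)` in `H` for a.e. `t`. -/
theorem rakotoson_temam_ae_weak_convergence
    {H : Type*} [NormedAddCommGroup H] [InnerProductSpace ℝ H] [CompleteSpace H]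
    [TopologicalSpace.SeparableSpace H]
    (T : ℝ) (hT : 0 < T)
    (u : ℕ → ℝ → H) (u₀ : ℝ → H)
    (hu : ∀ n, MemLp (u n) 2 (volume.restrict (Set.Ioo 0 T)))
    (hu₀ : MemLp u₀ 2 (volume.restrict (Set.Ioo 0 T)))
    (hbdd : ∀ᵐ t ∂(volume.restrict (Set.Ioo 0 T)), ∃ M : ℝ, ∀ n, ‖u n t‖ ≤ M)
    (hweak : ∀ v : ℝ → H, MemLp v 2 (volume.restrict (Set.Ioo 0 T)) →
      Tendsto (fun n => ∫ t, ⟪u n t, v t⟫ ∂(volume.restrict (Set.Ioo 0 T))) atTop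
        (𝓝 (∫ t, ⟪u₀ t, v t⟫ ∂(volume.restrict (Set.Ioo 0 T)))))
    (D : Set H) (hD_count : D.Countable) (hD_dense : Dense D)
    (hcpt : ∀ ψ ∈ D, ∃ K : Set (Lp ℝ 1 (volume.restrict (Set.Ioo 0 T))),
      IsCompact K ∧ ∀ n, ∃ g ∈ K,
        (g : ℝ → ℝ) =ᵐ[volume.restrict (Set.Ioo 0 T)] fun t => ⟪u n t, ψ⟫) :
    ∃ φ : ℕ → ℕ, StrictMono φ ∧
      ∀ᵐ t ∂(volume.restrict (Set.Ioo 0 T)), ∀ ψ : H,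
        Tendsto (fun k => ⟪u (φ k) t, ψ⟫) atTop (𝓝 ⟪u₀ t, ψ⟫) := by
  set μ : Measure ℝ := volume.restrict (Set.Ioo 0 T) with hμdef
  haveI : IsFiniteMeasure μ := ⟨by
    rw [hμdef, Measure.restrict_apply_univ, Real.volume_Ioo]
    exact ENNReal.ofReal_lt_top⟩
  haveI : Fact ((1 : ENNReal) ≤ 1) := ⟨le_rfl⟩
  haveI : Nonempty H := ⟨0⟩
  -- Step A: for every ψ ∈ D, the scalar functions converge in L¹.
  have stepA : ∀ ψ ∈ D,
      Tendsto (fun n => eLpNorm ((fun t => ⟪u n t, ψ⟫) - fun t => ⟪u₀ t, ψ⟫) 1 μ)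
        atTop (𝓝 0) := by
    intro ψ hψ
    have hg1 : ∀ n, MemLp (fun t => ⟪u n t, ψ⟫) 1 μ := fun n =>
      ((hu n).inner_const ψ).mono_exponent (by norm_num)
    have hg₀1 : MemLp (fun t => ⟪u₀ t, ψ⟫) 1 μ :=
      (hu₀.inner_const ψ).mono_exponent (by norm_num)
    rw [← Lp.tendsto_Lp_iff_tendsto_eLpNorm'' _ hg1 _ hg₀1]
    set G : ℕ → Lp ℝ 1 μ := fun n => (hg1 n).toLp _ with hGdef
    -- weak convergence of set integrals
    have hset : ∀ s : Set ℝ, MeasurableSet s →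
        Tendsto (fun n => ∫ t in s, ⟪u n t, ψ⟫ ∂μ) atTop (𝓝 (∫ t in s, ⟪u₀ t, ψ⟫ ∂μ)) := by
      intro s hs
      have hv : MemLp (s.indicator fun _ => ψ) 2 μ :=
        MemLp.indicator hs (memLp_const ψ)
      have key := hweak _ hv
      have hrw : ∀ w : ℝ → H,
          (fun t => ⟪w t, s.indicator (fun _ => ψ) t⟫) = s.indicator fun t => ⟪w t, ψ⟫ := by
        intro w
        funext t
        by_cases ht : t ∈ s <;>
          simp [Set.indicator_of_mem, Set.indicator_of_notMem, ht]
      simpa only [hrw, integral_indicator hs] using key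
    refine tendsto_of_subseq_tendsto fun ns hns => ?_
    obtain ⟨K, hK, hKmem⟩ := hcpt ψ hψ
    have hGK : ∀ n, G n ∈ K := by
      intro n
      obtain ⟨g, hgK, hgae⟩ := hKmem n
      have : G n = g := Lp.ext ((MemLp.coeFn_toLp (hg1 n)).trans hgae.symm)
      rwa [this]
    obtain ⟨h, hhK, ms, hms, hconv⟩ := hK.tendsto_subseq fun k => hGK (ns k)
    have hid : h = hg₀1.toLp _ := by
      refine Lp.ext ?_
      refine (Integrable.ae_eq_of_forall_setIntegral_eq _ _ (L1.integrable_coeFn h)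
        (memLp_one_iff_integrable.mp hg₀1) ?_).trans (MemLp.coeFn_toLp hg₀1).symm
      intro s hs hμs
      have h1 : Tendsto (fun k => ∫ t in s, (G (ns (ms k)) : ℝ → ℝ) t ∂μ) atTop
          (𝓝 (∫ t in s, h t ∂μ)) := ((continuous_setIntegral s).tendsto h).comp hconv
      have h2 : Tendsto (fun k => ∫ t in s, (G (ns (ms k)) : ℝ → ℝ) t ∂μ) atTop
          (𝓝 (∫ t in s, ⟪u₀ t, ψ⟫ ∂μ)) := by
        have h3 := (hset s hs).comp (hns.comp hms.tendsto_atTop)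
        refine h3.congr fun k => ?_
        exact (integral_congr_ae (ae_restrict_of_ae
          (MemLp.coeFn_toLp (hg1 (ns (ms k)))))).symm
      exact tendsto_nhds_unique h1 h2
    exact ⟨ms, hid ▸ hconv⟩
  -- enumerate D
  obtain ⟨e, he⟩ := Set.Countable.exists_eq_range hD_count hD_dense.nonempty
  have heD : ∀ j, e j ∈ D := fun j => by rw [he]; exact Set.mem_range_self j
  -- Step C: diagonal-type extraction via a summability trick
  set F : ℕ → ℕ → ℝ → ENNReal := fun n j t =>
    ENNReal.ofReal (min 1 |⟪u n t, e j⟫ - ⟪u₀ t, e j⟫|) with hFdef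
  have hdm : ∀ n j, AEMeasurable (fun t => ⟪u n t, e j⟫ - ⟪u₀ t, e j⟫) μ := fun n j =>
    (((hu n).1.inner aestronglyMeasurable_const).sub
      (hu₀.1.inner aestronglyMeasurable_const)).aemeasurable
  have hFm : ∀ n j, AEMeasurable (F n j) μ := fun n j =>
    ((ENNReal.continuous_ofReal.comp (continuous_const.min continuous_abs)).measurable).comp_aemeasurable
      (hdm n j)
  have habd : ∀ n j, ∫⁻ t, F n j t ∂μ ≤ ENNReal.ofReal T := by
    intro n j
    calc ∫⁻ t, F n j t ∂μ ≤ ∫⁻ _, (1 : ENNReal) ∂μ := by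
          refine lintegral_mono fun t => ?_
          rw [hFdef]
          calc ENNReal.ofReal (min 1 |⟪u n t, e j⟫ - ⟪u₀ t, e j⟫|) ≤ ENNReal.ofReal 1 :=
                ENNReal.ofReal_le_ofReal (min_le_left _ _)
          _ = 1 := ENNReal.ofReal_one
    _ = μ Set.univ := by rw [lintegral_const, one_mul]
    _ = ENNReal.ofReal T := by
          rw [hμdef, Measure.restrict_apply_univ, Real.volume_Ioo, sub_zero]
  have ha0 : ∀ j, Tendsto (fun n => ∫⁻ t, F n j t ∂μ) atTop (𝓝 0) := by
    intro j
    have hle : ∀ n, ∫⁻ t, F n j t ∂μ ≤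
        eLpNorm ((fun t => ⟪u n t, e j⟫) - fun t => ⟪u₀ t, e j⟫) 1 μ := by
      intro n
      rw [eLpNorm_one_eq_lintegral_enorm]
      refine lintegral_mono fun t => ?_
      rw [hFdef]
      simp only [Pi.sub_apply]
      rw [Real.enorm_eq_ofReal_abs]
      exact ENNReal.ofReal_le_ofReal (min_le_right _ _)
    exact tendsto_of_tendsto_of_tendsto_of_le_of_le tendsto_const_nhds
      (stepA (e j) (heD j)) (fun n => zero_le) hle
  set S : ℕ → ENNReal := fun n => ∑' j, (2⁻¹ : ENNReal) ^ j * ∫⁻ t, F n j t ∂μ with hSdef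
  have hgeo : ∑' i : ℕ, (2⁻¹ : ENNReal) ^ i = 2 := by
    rw [ENNReal.tsum_geometric, ENNReal.one_sub_inv_two, inv_inv]
  have htail : ∀ n J, ∑' i : ℕ, (2⁻¹ : ENNReal) ^ (i + J) * ∫⁻ t, F n (i + J) t ∂μ ≤
      (2⁻¹ : ENNReal) ^ J * (2 * ENNReal.ofReal T) := by
    intro n J
    calc ∑' i : ℕ, (2⁻¹ : ENNReal) ^ (i + J) * ∫⁻ t, F n (i + J) t ∂μ
        ≤ ∑' i : ℕ, (2⁻¹ : ENNReal) ^ (i + J) * ENNReal.ofReal T :=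
          ENNReal.tsum_le_tsum fun i => mul_le_mul_right (habd n (i + J)) _
      _ = (∑' i : ℕ, (2⁻¹ : ENNReal) ^ i) * ((2⁻¹ : ENNReal) ^ J * ENNReal.ofReal T) := by
          simp_rw [pow_add, mul_assoc]
          rw [ENNReal.tsum_mul_right]
      _ = (2⁻¹ : ENNReal) ^ J * (2 * ENNReal.ofReal T) := by rw [hgeo]; ring
  have hS0 : Tendsto S atTop (𝓝 0) := by
    rw [ENNReal.tendsto_atTop_zero]
    intro ε hε
    rcases eq_or_ne ε ⊤ with rfl | hεtop
    · exact ⟨0, fun n _ => le_top⟩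
    have hε2 : (0 : ENNReal) < ε / 2 := ENNReal.div_pos hε.ne' (by norm_num)
    have hpow : Tendsto (fun J : ℕ => (2⁻¹ : ENNReal) ^ J * (2 * ENNReal.ofReal T))
        atTop (𝓝 0) := by
      have h1 := ENNReal.tendsto_pow_atTop_nhds_zero_of_lt_one
        (by norm_num : (2⁻¹ : ENNReal) < 1)
      have h2 : Tendsto (fun J : ℕ => (2⁻¹ : ENNReal) ^ J * (2 * ENNReal.ofReal T)) atTop
          (𝓝 (0 * (2 * ENNReal.ofReal T))) :=
        ENNReal.Tendsto.mul_const h1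
          (Or.inr (ENNReal.mul_ne_top (by norm_num : (2:ENNReal) ≠ ⊤) ENNReal.ofReal_ne_top))
      simpa using h2
    obtain ⟨J, hJ⟩ := (hpow.eventually_lt_const hε2).exists
    have hfin : Tendsto (fun n => ∑ j ∈ Finset.range J,
        (2⁻¹ : ENNReal) ^ j * ∫⁻ t, F n j t ∂μ) atTop (𝓝 0) := by
      have h : Tendsto (fun n => ∑ j ∈ Finset.range J,
          (2⁻¹ : ENNReal) ^ j * ∫⁻ t, F n j t ∂μ) atTop
          (𝓝 (∑ j ∈ Finset.range J, (2⁻¹ : ENNReal) ^ j * 0)) :=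
        tendsto_finset_sum (Finset.range J) fun j _ =>
          ENNReal.Tendsto.const_mul (ha0 j)
            (Or.inr (ENNReal.pow_ne_top (by norm_num : (2⁻¹:ENNReal) ≠ ⊤)))
      simpa using h
    obtain ⟨N, hN⟩ := eventually_atTop.mp (hfin.eventually_lt_const hε2)
    refine ⟨N, fun n hn => ?_⟩
    have hsplit : S n = ∑ j ∈ Finset.range J, (2⁻¹ : ENNReal) ^ j * ∫⁻ t, F n j t ∂μ +
        ∑' i : ℕ, (2⁻¹ : ENNReal) ^ (i + J) * ∫⁻ t, F n (i + J) t ∂μ :=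
      (Summable.sum_add_tsum_nat_add' (f := fun j => (2⁻¹ : ENNReal) ^ j * ∫⁻ t, F n j t ∂μ)
        (k := J) ENNReal.summable).symm
    calc S n ≤ ε / 2 + ε / 2 := by
          rw [hsplit]
          exact add_le_add (hN n hn).le (le_trans (htail n J) hJ.le)
      _ = ε := ENNReal.add_halves ε
  obtain ⟨φ, hφmono, hφ⟩ := extraction_forall_of_eventually
    (fun k => hS0.eventually_lt_const (ENNReal.pow_pos (by norm_num : (0:ENNReal) < 2⁻¹) k))
  refine ⟨φ, hφmono, ?_⟩
  -- from summability of S (φ k), get a.e. convergence against every e j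
  set P : ℕ → ℝ → ENNReal := fun n t => ∑' j, (2⁻¹ : ENNReal) ^ j * F n j t with hPdef
  have hPm : ∀ n, AEMeasurable (P n) μ := fun n =>
    AEMeasurable.ennreal_tsum fun j => (hFm n j).const_mul _
  have hSP : ∀ n, ∫⁻ t, P n t ∂μ = S n := by
    intro n
    rw [hPdef, hSdef]
    rw [lintegral_tsum fun j => (hFm n j).const_mul _]
    exact tsum_congr fun j => lintegral_const_mul' _ _ (ENNReal.pow_ne_top (by norm_num : (2⁻¹:ENNReal) ≠ ⊤))
  have hsum : ∫⁻ t, ∑' k, P (φ k) t ∂μ ≠ ⊤ := by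
    rw [lintegral_tsum fun k => hPm (φ k)]
    refine ne_top_of_le_ne_top (by norm_num : (2 : ENNReal) ≠ ⊤) ?_
    calc ∑' k, ∫⁻ t, P (φ k) t ∂μ = ∑' k, S (φ k) := tsum_congr fun k => hSP (φ k)
      _ ≤ ∑' k, (2⁻¹ : ENNReal) ^ k :=
          ENNReal.tsum_le_tsum fun k => (hφ k).le
      _ = 2 := hgeo
  have haelt : ∀ᵐ t ∂μ, ∑' k, P (φ k) t < ⊤ :=
    ae_lt_top' (AEMeasurable.ennreal_tsum fun k => hPm (φ k)) hsum
  have hae1 : ∀ᵐ t ∂μ, ∀ j,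
      Tendsto (fun k => ⟪u (φ k) t, e j⟫) atTop (𝓝 ⟪u₀ t, e j⟫) := by
    filter_upwards [haelt] with t ht
    intro j
    have hw : (2 : ENNReal) ^ j * (2⁻¹ : ENNReal) ^ j = 1 := by
      rw [← mul_pow, ENNReal.mul_inv_cancel (by norm_num) (by norm_num), one_pow]
    have hFP : ∀ k, F (φ k) j t ≤ (2 : ENNReal) ^ j * P (φ k) t := by
      intro k
      calc F (φ k) j t = (2 : ENNReal) ^ j * ((2⁻¹ : ENNReal) ^ j * F (φ k) j t) := by
            rw [← mul_assoc, hw, one_mul]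
        _ ≤ (2 : ENNReal) ^ j * P (φ k) t :=
            mul_le_mul_right (ENNReal.le_tsum j) _
    have h1 : ∑' k, F (φ k) j t ≠ ⊤ := by
      refine ne_top_of_le_ne_top ?_ (ENNReal.tsum_le_tsum hFP)
      rw [ENNReal.tsum_mul_left]
      exact ENNReal.mul_ne_top (ENNReal.pow_ne_top (by norm_num : (2:ENNReal) ≠ ⊤)) ht.ne
    have h2 : Tendsto (fun k => F (φ k) j t) atTop (𝓝 0) :=
      ENNReal.tendsto_atTop_zero_of_tsum_ne_top h1
    have h3 : Tendsto (fun k => min 1 |⟪u (φ k) t, e j⟫ - ⟪u₀ t, e j⟫|) atTop (𝓝 0) := by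
      have h4 := (ENNReal.tendsto_toReal (by norm_num : (0 : ENNReal) ≠ ⊤)).comp h2
      rw [ENNReal.toReal_zero] at h4
      refine h4.congr fun k => ?_
      simp only [Function.comp_apply, hFdef]
      exact ENNReal.toReal_ofReal (le_min zero_le_one (abs_nonneg _))
    have h5 : Tendsto (fun k => |⟪u (φ k) t, e j⟫ - ⟪u₀ t, e j⟫|) atTop (𝓝 0) := by
      refine Tendsto.congr' ?_ h3
      filter_upwards [h3.eventually_lt_const (by norm_num : (0 : ℝ) < 1)] with k hk
      rcases min_cases 1 (|⟪u (φ k) t, e j⟫ - ⟪u₀ t, e j⟫|) with ⟨hmin, hle⟩ | ⟨hmin, _⟩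
      · rw [hmin] at hk; norm_num at hk
      · exact hmin
    rw [← tendsto_sub_nhds_zero_iff]
    exact (tendsto_zero_iff_abs_tendsto_zero _).mpr h5
  -- Step D: extend from the dense set to all of H using the uniform bound
  filter_upwards [hbdd, hae1] with t hMex hconv ψ
  obtain ⟨M, hM⟩ := hMex
  have hM0 : 0 ≤ M := le_trans (norm_nonneg (u 0 t)) (hM 0)
  rw [Metric.tendsto_atTop]
  intro ε hε
  set C : ℝ := M + ‖u₀ t‖ + 1 with hCdef
  have hC0 : 0 < C := by have := norm_nonneg (u₀ t); linarith
  obtain ⟨ψ', hψ'D, hdist⟩ := hD_dense.exists_dist_lt ψ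
    (show (0 : ℝ) < ε / (2 * C) by positivity)
  rw [he] at hψ'D
  obtain ⟨j, rfl⟩ := hψ'D
  obtain ⟨N, hN⟩ := Metric.tendsto_atTop.mp (hconv j) (ε / 2) (by positivity)
  refine ⟨N, fun k hk => ?_⟩
  rw [Real.dist_eq]
  have e1 : ⟪u (φ k) t, ψ⟫ - ⟪u₀ t, ψ⟫ =
      (⟪u (φ k) t, e j⟫ - ⟪u₀ t, e j⟫) + ⟪u (φ k) t - u₀ t, ψ - e j⟫ := by
    simp only [inner_sub_left, inner_sub_right]
    ring
  have hX : |⟪u (φ k) t, e j⟫ - ⟪u₀ t, e j⟫| < ε / 2 := by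
    have := hN k hk
    rwa [Real.dist_eq] at this
  have b3 : ‖u (φ k) t - u₀ t‖ ≤ C := by
    calc ‖u (φ k) t - u₀ t‖ ≤ ‖u (φ k) t‖ + ‖u₀ t‖ := norm_sub_le _ _
      _ ≤ C := by have := hM (φ k); rw [hCdef]; linarith
  have hY : |⟪u (φ k) t - u₀ t, ψ - e j⟫| ≤ C * ‖ψ - e j‖ :=
    le_trans (abs_real_inner_le_norm _ _)
      (mul_le_mul_of_nonneg_right b3 (norm_nonneg _))
  have b4 : ‖ψ - e j‖ < ε / (2 * C) := by
    rwa [dist_eq_norm] at hdist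
  have hY2 : C * ‖ψ - e j‖ < C * (ε / (2 * C)) :=
    mul_lt_mul_of_pos_left b4 hC0
  have hhalf : C * (ε / (2 * C)) = ε / 2 := by
    field_simp
  have habs := abs_add_le (⟪u (φ k) t, e j⟫ - ⟪u₀ t, e j⟫) (⟪u (φ k) t - u₀ t, ψ - e j⟫)
  rw [e1]
  calc |(⟪u (φ k) t, e j⟫ - ⟪u₀ t, e j⟫) + ⟪u (φ k) t - u₀ t, ψ - e j⟫|
      ≤ |⟪u (φ k) t, e j⟫ - ⟪u₀ t, e j⟫| + |⟪u (φ k) t - u₀ t, ψ - e j⟫| := habs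
    _ < ε / 2 + ε / 2 := by
        have := lt_of_le_of_lt hY hY2
        rw [hhalf] at this
        exact add_lt_add hX this
    _ = ε := by ring
end
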